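/- Let S be a dense subsemigroup of (T,+), e ∈ E(T), and (X,⟨T_s⟩_{s∈S}) a dynamical system. If x, y ∈ X are proximal near e, then there exists a minimal left ideal L of e*_S such that T_u(x) = T_u(y) for all u ∈ L. -/

import Mathlib

open Filter Topology Set

attribute [local instance] Ultrafilter.add Ultrafilter.addSemigroup

universe u

section NearIdem

variable {T : Type u} [AddSemigroup T] [TopologicalSpace T]

/-- The set of ultrafilters on `S` converging to `e` (denoted `e*_S`). -/
def EStar (S : AddSubsemigroup T) (e : T) : Set (Ultrafilter S) :=
  {p | ∀ U ∈ nhds e, {s : S | (s : T) ∈ U} ∈ p}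

/-- `B ⊆ S` is syndetic near `e`. -/
def SyndeticNear (S : AddSubsemigroup T) (e : T) (B : Set S) : Prop :=
  ∀ U ∈ nhds e, ∃ F : Finset S, (∀ t ∈ F, (t : T) ∈ U) ∧
    ∃ V ∈ nhds e, ∀ s : S, (s : T) ∈ V → ∃ t ∈ F, t + s ∈ B

/-- `A ⊆ S` is topologically piecewise syndetic near `e`. -/
def TopPWSNear (S : AddSubsemigroup T) (e : T) (A : Set S) : Prop :=
  ∀ U ∈ nhds e, ∃ F : Finset S, (∀ t ∈ F, (t : T) ∈ U) ∧
    ∃ V ∈ nhds e, ∀ G : Finset S, ∀ O ∈ nhds e, ∃ x : S, (x : T) ∈ O ∧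
      ∀ g ∈ G, (g : T) ∈ V → ∃ t ∈ F, t + (g + x) ∈ A

/-- Left ideal of a subsemigroup `E` of `βM`. -/
def IsLeftIdealIn {M : Type*} [AddSemigroup M] (E L : Set (Ultrafilter M)) : Prop :=
  L.Nonempty ∧ L ⊆ E ∧ ∀ p ∈ E, ∀ q ∈ L, p + q ∈ L

/-- Minimal left ideal of `E`. -/
def IsMinimalLeftIdealIn {M : Type*} [AddSemigroup M] (E L : Set (Ultrafilter M)) : Prop :=
  IsLeftIdealIn E L ∧ ∀ L', IsLeftIdealIn E L' → L' ⊆ L → L' = L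

/-- The smallest ideal `K(E)`, the union of all minimal left ideals of `E`. -/
def SmallestIdeal {M : Type*} [AddSemigroup M] (E : Set (Ultrafilter M)) : Set (Ultrafilter M) :=
  {p | ∃ L, IsMinimalLeftIdealIn E L ∧ p ∈ L}

/-- `T_p(x) = p`-`lim_(s ∈ S) T_s(x)`. -/
noncomputable def TP {M : Type*} {X : Type*} [TopologicalSpace X]
    (Ts : M → X → X) (p : Ultrafilter M) (x : X) : X :=
  (p.map fun s => Ts s x).lim

/-- `x` is a uniformly recurrent point near `e`. -/
def UnifRecNear (S : AddSubsemigroup T) (e : T) {X : Type*} [TopologicalSpace X]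
    (Ts : S → X → X) (x : X) : Prop :=
  ∀ W ∈ nhds x, SyndeticNear S e {s : S | Ts s x ∈ W}

/-- `x` and `y` are proximal near `e` (characterized via `e*_S`). -/
noncomputable def ProximalNear (S : AddSubsemigroup T) (e : T) {X : Type*} [TopologicalSpace X]
    (Ts : S → X → X) (x y : X) : Prop :=
  ∃ p ∈ EStar S e, TP Ts p x = TP Ts p y

/-!
Since `T_{q+p} = T_q ∘ T_p`, every `u = q + p` with `q ∈ e*_S` identifies `x` and `y` as soon as
`p` does, so it suffices to find a minimal left ideal inside the left ideal `e*_S + p`. That set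
is closed, being a continuous image of the compact set `e*_S`, and a closed left ideal contains a
minimal one by Zorn's lemma: by compactness, chains of closed left ideals have nonempty
intersections, and a left ideal `L' ⊆ L` contains the closed left ideal `e*_S + q` for any
`q ∈ L'`.
-/

section LeftIdeal

variable {M : Type*} [AddSemigroup M] {E : Set (Ultrafilter M)}

theorem IsLeftIdealIn.image_add_right_subset {L : Set (Ultrafilter M)} (hL : IsLeftIdealIn E L)
    {q : Ultrafilter M} (hq : q ∈ L) : (· + q) '' E ⊆ L := by
  rintro _ ⟨r, hr, rfl⟩
  exact hL.2.2 r hr q hq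

theorem isLeftIdealIn_image_add_right (hadd : ∀ p ∈ E, ∀ q ∈ E, p + q ∈ E)
    {q : Ultrafilter M} (hq : q ∈ E) : IsLeftIdealIn E ((· + q) '' E) := by
  refine ⟨⟨q + q, q, hq, rfl⟩, ?_, ?_⟩
  · rintro _ ⟨r, hr, rfl⟩
    exact hadd r hr q hq
  · rintro r hr _ ⟨s, hs, rfl⟩
    exact ⟨r + s, hadd r hr s hs, add_assoc r s q⟩

theorem IsClosed.image_add_right (hE : IsClosed E) (q : Ultrafilter M) :
    IsClosed ((· + q) '' E) :=
  (hE.isCompact.image (Ultrafilter.continuous_add_left q)).isClosed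

theorem isLeftIdealIn_sInter_of_isChain {c : Set (Set (Ultrafilter M))}
    (hc : ∀ L ∈ c, IsLeftIdealIn E L ∧ IsClosed L) (hchain : IsChain (· ⊆ ·) c)
    (hne : c.Nonempty) : IsLeftIdealIn E (⋂₀ c) := by
  obtain ⟨L, hL⟩ := hne
  have : Nonempty c := ⟨⟨L, hL⟩⟩
  refine ⟨?_, (sInter_subset_of_mem hL).trans (hc L hL).1.2.1, ?_⟩
  · exact IsCompact.nonempty_sInter_of_directed_nonempty_isCompact_isClosed
      (IsChain.directedOn hchain.symm) (fun L hL => (hc L hL).1.1)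
      (fun L hL => (hc L hL).2.isCompact) (fun L hL => (hc L hL).2)
  · intro p hp q hq
    exact mem_sInter.2 fun L' hL' => (hc L' hL').1.2.2 p hp q (mem_sInter.1 hq L' hL')

theorem IsLeftIdealIn.exists_isMinimalLeftIdealIn_subset (hE : IsClosed E)
    (hadd : ∀ p ∈ E, ∀ q ∈ E, p + q ∈ E) {L₀ : Set (Ultrafilter M)}
    (hL₀ : IsLeftIdealIn E L₀) (hL₀c : IsClosed L₀) :
    ∃ L ⊆ L₀, IsMinimalLeftIdealIn E L := by
  obtain ⟨L, hLL₀, hLmin⟩ := zorn_superset_nonempty {L | IsLeftIdealIn E L ∧ IsClosed L}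
    (fun c hcS hchain hne => ⟨⋂₀ c,
      ⟨isLeftIdealIn_sInter_of_isChain hcS hchain hne, isClosed_sInter fun L hL => (hcS hL).2⟩,
      fun _ => sInter_subset_of_mem⟩) L₀ ⟨hL₀, hL₀c⟩
  refine ⟨L, hLL₀, hLmin.prop.1, fun L' hL' hL'L => ?_⟩
  obtain ⟨q, hq⟩ := hL'.1
  have hqL' : (· + q) '' E ⊆ L' := hL'.image_add_right_subset hq
  have hLq : L ⊆ (· + q) '' E :=
    hLmin.le_of_le ⟨isLeftIdealIn_image_add_right hadd (hL'.2.1 hq), hE.image_add_right q⟩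
      (hqL'.trans hL'L)
  exact hL'L.antisymm (hLq.trans hqL')

end LeftIdeal

section Limit

variable {M X : Type*} [TopologicalSpace X] [CompactSpace X]

theorem tendsto_TP (Ts : M → X → X) (p : Ultrafilter M) (x : X) :
    Tendsto (fun s => Ts s x) p (𝓝 (TP Ts p x)) :=
  (p.map fun s => Ts s x).le_nhds_lim

theorem TP_eq_of_tendsto [T2Space X] {Ts : M → X → X} {p : Ultrafilter M} {x z : X}
    (h : Tendsto (fun s => Ts s x) p (𝓝 z)) : TP Ts p x = z :=
  tendsto_nhds_unique (tendsto_TP Ts p x) h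

theorem TP_add [AddSemigroup M] [T2Space X] {Ts : M → X → X} (hTcont : ∀ s, Continuous (Ts s))
    (hTact : ∀ s t z, Ts s (Ts t z) = Ts (s + t) z) (q p : Ultrafilter M) (x : X) :
    TP Ts (q + p) x = TP Ts q (TP Ts p x) := by
  refine TP_eq_of_tendsto (tendsto_nhds.2 fun A hAo hA => ?_)
  show ∀ᶠ m in (q + p : Ultrafilter M), Ts m x ∈ A
  rw [Ultrafilter.eventually_add]
  filter_upwards [tendsto_TP Ts q _ (hAo.mem_nhds hA)] with a ha
  have hTa : Tendsto (fun b => Ts a (Ts b x)) p (𝓝 (Ts a (TP Ts p x))) :=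
    ((hTcont a).tendsto _).comp (tendsto_TP Ts p x)
  filter_upwards [hTa (hAo.mem_nhds ha)] with b hb
  rwa [← hTact]

end Limit

theorem isClosed_EStar (S : AddSubsemigroup T) (e : T) : IsClosed (EStar S e) := by
  have hEStar : EStar S e = ⋂ U ∈ 𝓝 e, {p : Ultrafilter S | {s : S | (s : T) ∈ U} ∈ p} := by
    ext p
    simp [EStar]
  rw [hEStar]
  exact isClosed_biInter fun U _ => ultrafilter_isClosed_basic _

theorem add_mem_EStar {S : AddSubsemigroup T} (hl : ∀ t : T, Continuous fun x : T => t + x)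
    (hr : ∀ t : T, Continuous fun x : T => x + t) {e : T} (he : e + e = e)
    {p q : Ultrafilter S} (hp : p ∈ EStar S e) (hq : q ∈ EStar S e) : p + q ∈ EStar S e := by
  intro U hU
  obtain ⟨V, hVU, hVo, heV⟩ := mem_nhds_iff.1 hU
  refine mem_of_superset (?_ : ∀ᶠ s : S in (p + q : Ultrafilter S), (s : T) ∈ V)
    fun s hs => hVU hs
  rw [Ultrafilter.eventually_add]
  have hVe : (· + e) ⁻¹' V ∈ 𝓝 e := (hr e).continuousAt (x := e) (hVo.mem_nhds (by rwa [he]))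
  filter_upwards [hp _ hVe] with a ha
  exact hq _ ((hl a).continuousAt (hVo.mem_nhds ha))

variable [T2Space T]

theorem proximalNear_minimal_left_ideal_general (S : AddSubsemigroup T)
    (hl : ∀ t : T, Continuous fun x : T => t + x)
    (hr : ∀ t : T, Continuous fun x : T => x + t)
    (e : T) (he : e + e = e)
    {X : Type u} [TopologicalSpace X] [CompactSpace X] [T2Space X]
    (Ts : S → X → X) (hTcont : ∀ s, Continuous (Ts s))
    (hTact : ∀ s t z, Ts s (Ts t z) = Ts (s + t) z) (x y : X)
    (hprox : ProximalNear S e Ts x y) :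
    ∃ L, IsMinimalLeftIdealIn (EStar S e) L ∧ ∀ u ∈ L, TP Ts u x = TP Ts u y := by
  obtain ⟨p, hpE, hpxy⟩ := hprox
  have hadd : ∀ p ∈ EStar S e, ∀ q ∈ EStar S e, p + q ∈ EStar S e :=
    fun _ hp _ hq => add_mem_EStar hl hr he hp hq
  obtain ⟨L, hLp, hL⟩ := (isLeftIdealIn_image_add_right hadd hpE).exists_isMinimalLeftIdealIn_subset
    (isClosed_EStar S e) hadd ((isClosed_EStar S e).image_add_right p)
  refine ⟨L, hL, fun u hu => ?_⟩
  obtain ⟨q, -, rfl⟩ := hLp hu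
  rw [TP_add hTcont hTact, TP_add hTcont hTact, hpxy]

/-- If `x` and `y` are proximal near `e`, then `T_u(x) = T_u(y)` for all `u`
in some minimal left ideal of `e*_S`. -/
theorem proximalNear_minimal_left_ideal (S : AddSubsemigroup T) (hdense : Dense (S : Set T))
    (hl : ∀ t : T, Continuous fun x : T => t + x)
    (hr : ∀ t : T, Continuous fun x : T => x + t)
    (e : T) (he : e + e = e)
    {X : Type u} [TopologicalSpace X] [CompactSpace X] [T2Space X]
    (Ts : S → X → X) (hTcont : ∀ s, Continuous (Ts s))
    (hTact : ∀ s t z, Ts s (Ts t z) = Ts (s + t) z) (x y : X)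
    (hprox : ProximalNear S e Ts x y) :
    ∃ L, IsMinimalLeftIdealIn (EStar S e) L ∧ ∀ u ∈ L, TP Ts u x = TP Ts u y :=
  proximalNear_minimal_left_ideal_general S hl hr e he Ts hTcont hTact x y hprox

end NearIdem
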